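/- arXiv:1709.07130 — 8 statements merged into one kernel-verified Lean document; each statement's English description precedes it below -/
import Mathlib

section
/- Let x solve x''(t) = x'(t)(βq s(t) - 1) with s(t) = N - x(t)/q, x(0) = x0 where 0 < x0 < qN, and x'(0) = βq x0 (N - x0/q) > 0. Define φ = sqrt((βqN - 1)² - (βx0 - 1)² + 1), x1 = qN + (φ-1)/β, x2 = qN + (-φ-1)/β, g(t) = ((x1 - x0)/(x0 - x2)) e^{-φt}. Then x(t) = (x1 + g(t) x2)/(1 + g(t)) satisfies the ODE and the initial conditions. -/
/-!
Since `x₁ - x₂ = 2φ/β` and `g' = -φ g`, the Möbius image `x = (x₁ + g x₂)/(1 + g)` solves the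
logistic (Riccati) equation `x' = (β/2)(x₁ - x)(x - x₂)`. Differentiating once more,
`x'' = x' · (β/2)(x₁ + x₂ - 2x)`, and `(x₁ + x₂)/2 = qN - 1/β` turns the factor into
`βq(N - x/q) - 1`. At `t = 0` the formula gives `x₀`, and Vieta's relation
`(x₁ - x₀)(x₀ - x₂) = 2(qN - x₀)x₀` gives the initial slope; it also makes `g` positive,
so the denominator `1 + g` never vanishes.
-/

open Real

lemma hasDerivAt_const_mul_exp_neg_mul {g : ℝ → ℝ} {C k : ℝ}
    (hg : ∀ t, g t = C * exp (-k * t)) (t : ℝ) : HasDerivAt g (-k * g t) t := by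
  rw [hg t, funext hg]
  have hexp : HasDerivAt (fun s ↦ exp (-k * s)) (exp (-k * t) * -k) t := by
    simpa using ((hasDerivAt_id t).const_mul (-k)).exp
  exact (hexp.const_mul C).congr_deriv (by ring)

lemma hasDerivAt_of_eq_mobius {g x : ℝ → ℝ} {r x₁ x₂ : ℝ}
    (hg : ∀ t, HasDerivAt g (-(r * (x₁ - x₂)) * g t) t) (hg₁ : ∀ t, 1 + g t ≠ 0)
    (hx : ∀ t, x t = (x₁ + g t * x₂) / (1 + g t)) (t : ℝ) :
    HasDerivAt x (r * (x₁ - x t) * (x t - x₂)) t := by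
  have hnum : HasDerivAt (fun s ↦ x₁ + g s * x₂) (-(r * (x₁ - x₂)) * g t * x₂) t :=
    ((hg t).mul_const x₂).const_add x₁
  have hden : HasDerivAt (fun s ↦ 1 + g s) (-(r * (x₁ - x₂)) * g t) t := (hg t).const_add 1
  rw [hx t, funext hx]
  refine (hnum.div hden (hg₁ t)).congr_deriv ?_
  field_simp [hg₁ t]
  ring

lemma hasDerivAt_deriv_of_autonomous {x f f' : ℝ → ℝ}
    (hx : ∀ t, HasDerivAt x (f (x t)) t) (hf : ∀ y, HasDerivAt f (f' y) y) (t : ℝ) :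
    HasDerivAt (deriv x) (deriv x t * f' (x t)) t := by
  have hderiv : deriv x = f ∘ x := funext fun s ↦ (hx s).deriv
  rw [hderiv, Function.comp_apply, mul_comm]
  exact (hf (x t)).comp t (hx t)

lemma hasDerivAt_logistic (r x₁ x₂ y : ℝ) :
    HasDerivAt (fun y ↦ r * (x₁ - y) * (y - x₂)) (r * (x₁ + x₂ - 2 * y)) y := by
  have h := (((hasDerivAt_id y).const_sub x₁).const_mul r).mul ((hasDerivAt_id y).sub_const x₂)
  exact h.congr_deriv (by simp only [id]; ring)

lemma wmodel_roots_vieta {β q N x₀ φ : ℝ} (hβ : β ≠ 0)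
    (hφ : φ ^ 2 = (β * q * N - 1) ^ 2 - (β * x₀ - 1) ^ 2 + 1) :
    (q * N + (φ - 1) / β - x₀) * (x₀ - (q * N + (-φ - 1) / β)) = 2 * (q * N - x₀) * x₀ := by
  field_simp
  linear_combination hφ

theorem wmodel_solution_general (β q N x0 : ℝ)
    (hβ : 0 < β) (hq0 : 0 < q)
    (hx0 : 0 < x0) (hx0N : x0 < q * N)
    (harg : 0 < (β * q * N - 1)^2 - (β * x0 - 1)^2 + 1)
    (φ x1 x2 : ℝ) (g x : ℝ → ℝ)
    (hφ : φ = Real.sqrt ((β * q * N - 1)^2 - (β * x0 - 1)^2 + 1))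
    (hx1 : x1 = q * N + (φ - 1) / β)
    (hx2 : x2 = q * N + (-φ - 1) / β)
    (hg : ∀ t, g t = (x1 - x0) / (x0 - x2) * Real.exp (-φ * t))
    (hx : ∀ t, x t = (x1 + g t * x2) / (1 + g t)) :
    x 0 = x0 ∧
    deriv x 0 = β * q * x0 * (N - x0 / q) ∧
    (∀ t, HasDerivAt (deriv x) (deriv x t * (β * q * (N - x t / q) - 1)) t) := by
  have hφ2 : φ ^ 2 = (β * q * N - 1) ^ 2 - (β * x0 - 1) ^ 2 + 1 := hφ ▸ sq_sqrt harg.le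
  have hvieta : (x1 - x0) * (x0 - x2) = 2 * (q * N - x0) * x0 :=
    hx1 ▸ hx2 ▸ wmodel_roots_vieta hβ.ne' hφ2
  have hvieta_pos : 0 < (x1 - x0) * (x0 - x2) :=
    hvieta ▸ mul_pos (mul_pos two_pos (sub_pos.2 hx0N)) hx0
  have hC : 0 < (x1 - x0) / (x0 - x2) := div_pos_iff.2 (mul_pos_iff.1 hvieta_pos)
  have hg₁ : ∀ t, 1 + g t ≠ 0 := fun t ↦ by rw [hg t]; positivity
  have hrate : φ = β / 2 * (x1 - x2) := by rw [hx1, hx2]; field_simp; ring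
  have hx' := hasDerivAt_of_eq_mobius (hrate ▸ hasDerivAt_const_mul_exp_neg_mul hg) hg₁ hx
  have hx_zero : x 0 = x0 := by
    have h02 : x0 - x2 ≠ 0 := right_ne_zero_of_mul hvieta_pos.ne'
    have h₁ := hg₁ 0
    rw [hg, mul_zero, exp_zero, mul_one] at h₁
    rw [hx, hg, mul_zero, exp_zero, mul_one, div_eq_iff h₁]
    field_simp
    ring
  refine ⟨hx_zero, ?_, fun t ↦ ?_⟩
  · rw [(hx' 0).deriv, hx_zero, mul_assoc, hvieta]
    field_simp
  · refine (hasDerivAt_deriv_of_autonomous hx' (hasDerivAt_logistic _ x1 x2) t).congr_deriv ?_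
    rw [hx1, hx2]
    field_simp
    ring

theorem wmodel_solution (β q N x0 : ℝ)
    (hβ : 0 < β) (hq0 : 0 < q) (hq1 : q < 1) (hN : 0 < N)
    (hx0 : 0 < x0) (hx0N : x0 < q * N)
    (harg : 0 < (β * q * N - 1)^2 - (β * x0 - 1)^2 + 1)
    (φ x1 x2 : ℝ) (g x : ℝ → ℝ)
    (hφ : φ = Real.sqrt ((β * q * N - 1)^2 - (β * x0 - 1)^2 + 1))
    (hx1 : x1 = q * N + (φ - 1) / β)
    (hx2 : x2 = q * N + (-φ - 1) / β)
    (hg : ∀ t, g t = (x1 - x0) / (x0 - x2) * Real.exp (-φ * t))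
    (hx : ∀ t, x t = (x1 + g t * x2) / (1 + g t)) :
    x 0 = x0 ∧
    deriv x 0 = β * q * x0 * (N - x0 / q) ∧
    (∀ t, HasDerivAt (deriv x) (deriv x t * (β * q * (N - x t / q) - 1)) t) :=
  wmodel_solution_general β q N x0 hβ hq0 hx0 hx0N harg φ x1 x2 g x hφ hx1 hx2 hg hx
end

section
/- Let φ = sqrt((βqN - 1)² - (βx0 - 1)² + 1) and x1 = qN + (φ - 1)/β with β > 0, q ∈ (0,1), N > 0, 0 < x0 < qN, and βx0 < 1. Then x1 ≥ qN if and only if β ≥ 2/(qN + x0). -/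
/-!
Since `β > 0`, `x1 ≥ qN` amounts to `φ ≥ 1`, i.e. `(βqN - 1)² ≥ (βx0 - 1)²`. The difference of
these squares factors as `β (qN - x0) (β (qN + x0) - 2)`, and the first two factors are positive.
-/

lemma sq_mul_sub_one_sub_sq_mul_sub_one (β a c : ℝ) :
    (β * a - 1) ^ 2 - (β * c - 1) ^ 2 = β * (a - c) * (β * (a + c) - 2) := by
  ring

lemma one_le_sqrt_sq_mul_sub_one_sub_sq_add_one_iff {β a c : ℝ} (hβ : 0 < β) (hca : c < a) :
    1 ≤ √((β * a - 1) ^ 2 - (β * c - 1) ^ 2 + 1) ↔ 2 ≤ β * (a + c) := by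
  rw [Real.one_le_sqrt, le_add_iff_nonneg_left, sq_mul_sub_one_sub_sq_mul_sub_one,
    mul_nonneg_iff_of_pos_left (mul_pos hβ (sub_pos.mpr hca)), sub_nonneg]

lemma le_add_sub_one_div_iff {a φ β : ℝ} (hβ : 0 < β) : a ≤ a + (φ - 1) / β ↔ 1 ≤ φ := by
  rw [le_add_iff_nonneg_right, le_div_iff₀ hβ, zero_mul, sub_nonneg]

theorem wmodel_threshold_general (β q N x0 φ x1 : ℝ)
    (hβ : 0 < β)
    (hx0 : 0 < x0) (hx0N : x0 < q * N)
    (hφ : φ = Real.sqrt ((β * q * N - 1)^2 - (β * x0 - 1)^2 + 1))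
    (hx1 : x1 = q * N + (φ - 1) / β) :
    q * N ≤ x1 ↔ 2 / (q * N + x0) ≤ β := by
  rw [hx1, le_add_sub_one_div_iff hβ, hφ, mul_assoc β q N,
    one_le_sqrt_sq_mul_sub_one_sub_sq_add_one_iff hβ hx0N, div_le_iff₀ (by linarith)]

theorem wmodel_threshold (β q N x0 φ x1 : ℝ)
    (hβ : 0 < β) (hq0 : 0 < q) (hq1 : q < 1) (hN : 0 < N)
    (hx0 : 0 < x0) (hx0N : x0 < q * N) (hβx0 : β * x0 < 1)
    (harg : 0 ≤ (β * q * N - 1)^2 - (β * x0 - 1)^2 + 1)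
    (hφ : φ = Real.sqrt ((β * q * N - 1)^2 - (β * x0 - 1)^2 + 1))
    (hx1 : x1 = q * N + (φ - 1) / β) :
    q * N ≤ x1 ↔ 2 / (q * N + x0) ≤ β :=
  wmodel_threshold_general β q N x0 φ x1 hβ hx0 hx0N hφ hx1
end

section
/- Let x1(x0) = qN + (sqrt((βqN-1)² - (βx0-1)² + 1) - 1)/β with β > 0, 0 < x0 < qN, βx0 < 1, βqN > 1, and β < 2/(qN + x0). Then ∂x1/∂x0 = (1 - βx0)/sqrt((βqN-1)² - (βx0-1)² + 1) > 0, i.e. x1 is strictly increasing in x0. -/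
lemma hasDerivAt_sub_sq_affine_add_one (K β x : ℝ) :
    HasDerivAt (fun a => K - (β * a - 1) ^ 2 + 1) (2 * β * (1 - β * x)) x := by
  have hlin : HasDerivAt (fun a => β * a - 1) β x := by
    simpa using ((hasDerivAt_id x).const_mul β).sub_const 1
  refine (((hasDerivAt_const x K).sub (hlin.pow 2)).add_const 1).congr_deriv ?_
  push_cast
  ring

lemma hasDerivAt_sqrt_sub_sq_affine_div (K β x : ℝ) (hβ : β ≠ 0)
    (harg : 0 < K - (β * x - 1) ^ 2 + 1) :
    HasDerivAt (fun a => (Real.sqrt (K - (β * a - 1) ^ 2 + 1) - 1) / β)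
      ((1 - β * x) / Real.sqrt (K - (β * x - 1) ^ 2 + 1)) x := by
  have hs : Real.sqrt (K - (β * x - 1) ^ 2 + 1) ≠ 0 := (Real.sqrt_pos.2 harg).ne'
  have hroot := (hasDerivAt_sub_sq_affine_add_one K β x).sqrt harg.ne'
  refine ((hroot.sub_const 1).div_const β).congr_deriv ?_
  field_simp

theorem wmodel_x1_increasing_in_x0_general (β q N x0 : ℝ)
    (hβ : 0 < β) (hβx0 : β * x0 < 1)
    (harg : 0 < (β * q * N - 1)^2 - (β * x0 - 1)^2 + 1) :
    HasDerivAt (fun a => q * N + (Real.sqrt ((β * q * N - 1)^2 - (β * a - 1)^2 + 1) - 1) / β)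
      ((1 - β * x0) / Real.sqrt ((β * q * N - 1)^2 - (β * x0 - 1)^2 + 1)) x0 ∧
    0 < (1 - β * x0) / Real.sqrt ((β * q * N - 1)^2 - (β * x0 - 1)^2 + 1) :=
  ⟨(hasDerivAt_sqrt_sub_sq_affine_div _ β x0 hβ.ne' harg).const_add (q * N),
    div_pos (by linarith) (Real.sqrt_pos.2 harg)⟩

theorem wmodel_x1_increasing_in_x0 (β q N x0 : ℝ)
    (hβ : 0 < β) (hq0 : 0 < q) (hq1 : q < 1) (hN : 0 < N)
    (hx0 : 0 < x0) (hx0N : x0 < q * N) (hβx0 : β * x0 < 1) (hβqN : 1 < β * q * N)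
    (hβsmall : β < 2 / (q * N + x0))
    (harg : 0 < (β * q * N - 1)^2 - (β * x0 - 1)^2 + 1) :
    HasDerivAt (fun a => q * N + (Real.sqrt ((β * q * N - 1)^2 - (β * a - 1)^2 + 1) - 1) / β)
      ((1 - β * x0) / Real.sqrt ((β * q * N - 1)^2 - (β * x0 - 1)^2 + 1)) x0 ∧
    0 < (1 - β * x0) / Real.sqrt ((β * q * N - 1)^2 - (β * x0 - 1)^2 + 1) :=
  wmodel_x1_increasing_in_x0_general β q N x0 hβ hβx0 harg
end

section
/- Let φ(x0) = sqrt((βqN-1)² - (βx0-1)² + 1) and x1(x0) = qN + (φ(x0)-1)/β with β > 0, βqN > 1, βx0 < 1, and φ(x0) > 0. Then ∂²x1/∂x0² = -β((βqN-1)² + 1)/φ(x0)³ < 0, i.e. x1 is a strictly concave function of x0. -/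
/-!
The final population is an affine function of the arc `φ a = √(C - (β a - 1)²)` of an ellipse,
with `C = (β q N - 1)² + 1`. Differentiating twice, `φ' = -β (β a - 1) / φ` and, using
`φ² + (β a - 1)² = C`, `φ'' = -β² C / φ³`; dividing by `β` gives the claimed second derivative,
which is negative because `β > 0`, `C > 0` and `φ > 0`.
-/

open Filter Topology

section EllipseArc

variable (C β γ : ℝ)

theorem hasDerivAt_sqrt_sub_sq {a : ℝ} (ha : 0 < C - (β * a - γ) ^ 2) :
    HasDerivAt (fun a => √(C - (β * a - γ) ^ 2))
      (-β * (β * a - γ) / √(C - (β * a - γ) ^ 2)) a := by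
  have hinner : HasDerivAt (fun a => C - (β * a - γ) ^ 2) (-(2 * (β * a - γ) * β)) a := by
    simpa using ((((hasDerivAt_id a).const_mul β).sub_const γ).pow 2).const_sub C
  convert hinner.sqrt ha.ne' using 1
  field_simp [(Real.sqrt_pos.mpr ha).ne']

theorem deriv_sqrt_sub_sq_eventuallyEq {x : ℝ} (hx : 0 < C - (β * x - γ) ^ 2) :
    deriv (fun a => √(C - (β * a - γ) ^ 2))
      =ᶠ[𝓝 x] fun a => -β * (β * a - γ) / √(C - (β * a - γ) ^ 2) := by
  have hopen : ∀ᶠ a in 𝓝 x, 0 < C - (β * a - γ) ^ 2 :=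
    (by fun_prop : Continuous fun a => C - (β * a - γ) ^ 2).continuousAt.eventually
      (eventually_gt_nhds hx)
  exact hopen.mono fun a ha => (hasDerivAt_sqrt_sub_sq C β γ ha).deriv

theorem deriv_deriv_sqrt_sub_sq {x : ℝ} (hx : 0 < C - (β * x - γ) ^ 2) :
    deriv (deriv fun a => √(C - (β * a - γ) ^ 2)) x
      = -β ^ 2 * C / √(C - (β * x - γ) ^ 2) ^ 3 := by
  rw [(deriv_sqrt_sub_sq_eventuallyEq C β γ hx).deriv_eq]
  have hφ : 0 < √(C - (β * x - γ) ^ 2) := Real.sqrt_pos.mpr hx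
  have hnum : HasDerivAt (fun a => -β * (β * a - γ)) (-β * β) x := by
    simpa using (((hasDerivAt_id x).const_mul β).sub_const γ).const_mul (-β)
  rw [(hnum.fun_div (hasDerivAt_sqrt_sub_sq C β γ hx) hφ.ne').deriv]
  field_simp
  rw [Real.sq_sqrt hx.le]
  ring

end EllipseArc

theorem wmodel_x1_concave_in_x0_general (β q N x0 : ℝ)
    (hβ : 0 < β)
    (hφpos : 0 < Real.sqrt ((β * q * N - 1)^2 - (β * x0 - 1)^2 + 1)) :
    deriv (deriv (fun a => q * N + (Real.sqrt ((β * q * N - 1)^2 - (β * a - 1)^2 + 1) - 1) / β)) x0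
      = -β * ((β * q * N - 1)^2 + 1) / (Real.sqrt ((β * q * N - 1)^2 - (β * x0 - 1)^2 + 1))^3 ∧
    -β * ((β * q * N - 1)^2 + 1) / (Real.sqrt ((β * q * N - 1)^2 - (β * x0 - 1)^2 + 1))^3 < 0 := by
  simp only [sub_add_eq_add_sub _ (_ ^ 2) (1 : ℝ)] at hφpos ⊢
  set C := (β * q * N - 1) ^ 2 + 1
  have hx0 : 0 < C - (β * x0 - 1) ^ 2 := Real.sqrt_pos.mp hφpos
  have hderiv : deriv (fun a => q * N + (√(C - (β * a - 1) ^ 2) - 1) / β)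
      = fun a => deriv (fun a => √(C - (β * a - 1) ^ 2)) a / β := by
    funext a
    rw [deriv_const_add, deriv_div_const, deriv_sub_const]
  refine ⟨?_, div_neg_of_neg_of_pos (by nlinarith [sq_nonneg (β * q * N - 1)]) (by positivity)⟩
  rw [hderiv, deriv_div_const, deriv_deriv_sqrt_sub_sq C β 1 hx0]
  field_simp

theorem wmodel_x1_concave_in_x0 (β q N x0 : ℝ)
    (hβ : 0 < β) (hβqN : 1 < β * q * N) (hβx0 : β * x0 < 1)
    (hφpos : 0 < Real.sqrt ((β * q * N - 1)^2 - (β * x0 - 1)^2 + 1)) :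
    deriv (deriv (fun a => q * N + (Real.sqrt ((β * q * N - 1)^2 - (β * a - 1)^2 + 1) - 1) / β)) x0
      = -β * ((β * q * N - 1)^2 + 1) / (Real.sqrt ((β * q * N - 1)^2 - (β * x0 - 1)^2 + 1))^3 ∧
    -β * ((β * q * N - 1)^2 + 1) / (Real.sqrt ((β * q * N - 1)^2 - (β * x0 - 1)^2 + 1))^3 < 0 :=
  wmodel_x1_concave_in_x0_general β q N x0 hβ hφpos
end

section
/- Fix q ∈ (0,1), N > 0 and 0 < x0 < qN with qN + x0 > 0. Let x1(β) = qN + (sqrt((βqN-1)² - (βx0-1)² + 1) - 1)/β for β ∈ (0, 2/(qN+x0)). Then x1 is strictly increasing in β on this interval. -/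
/-!
The radicand equals `(1 - c β)² + d β²` with `c = qN - x0 > 0` and `d = 2 x0 (qN - x0) > 0`,
so `S β = √(…)` is the Euclidean length of the affine path `β ↦ (1 - c β, √d β)` and is
strictly convex, with `S 0 = 1`. The map `β ↦ (S β - 1) / β` is the slope of the chord of `S`
from `0`, hence strictly increasing. Concretely, for `0 < β < γ` the chord inequality
`γ S β < β S γ + (γ - β)` squares to `1 - c γ < S γ`, which holds because `d γ² > 0`.
-/

open Real Set

lemma one_sub_mul_lt_sqrt_sq_add {c d t : ℝ} (hd : 0 < d) (ht : t ≠ 0) :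
    1 - c * t < √((1 - c * t) ^ 2 + d * t ^ 2) :=
  calc 1 - c * t ≤ |1 - c * t| := le_abs_self _
    _ = √((1 - c * t) ^ 2) := (sqrt_sq_eq_abs _).symm
    _ < √((1 - c * t) ^ 2 + d * t ^ 2) :=
      sqrt_lt_sqrt (sq_nonneg _) (lt_add_of_pos_right _ (mul_pos hd (sq_pos_of_ne_zero ht)))

lemma strictMonoOn_sqrt_sq_add_sub_one_div {c d : ℝ} (hd : 0 < d) :
    StrictMonoOn (fun t => (√((1 - c * t) ^ 2 + d * t ^ 2) - 1) / t) (Ioi 0) := by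
  intro β (hβ : 0 < β) γ (hγ : 0 < γ) hβγ
  set Sβ := √((1 - c * β) ^ 2 + d * β ^ 2)
  set Sγ := √((1 - c * γ) ^ 2 + d * γ ^ 2)
  have hSβ : Sβ ^ 2 = (1 - c * β) ^ 2 + d * β ^ 2 := sq_sqrt (by positivity)
  have hSγ : Sγ ^ 2 = (1 - c * γ) ^ 2 + d * γ ^ 2 := sq_sqrt (by positivity)
  have key : 2 * β * (γ - β) * (1 - c * γ) < 2 * β * (γ - β) * Sγ :=
    mul_lt_mul_of_pos_left (one_sub_mul_lt_sqrt_sq_add hd hγ.ne')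
      (by have := sub_pos.2 hβγ; positivity)
  have chord : γ * Sβ < β * Sγ + (γ - β) := by
    refine lt_of_pow_lt_pow_left₀ 2 (by have := sub_pos.2 hβγ; positivity) ?_
    linear_combination γ ^ 2 * hSβ - β ^ 2 * hSγ + key
  rw [div_lt_div_iff₀ hβ hγ]
  linarith

theorem wmodel_x1_increasing_in_beta_general (q N x0 : ℝ)
    (hx0 : 0 < x0) (hx0N : x0 < q * N) :
    StrictMonoOn (fun β => q * N + (Real.sqrt ((β * q * N - 1)^2 - (β * x0 - 1)^2 + 1) - 1) / β)
      (Set.Ioo (0:ℝ) (2 / (q * N + x0))) := by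
  have radicand (β : ℝ) : (β * q * N - 1) ^ 2 - (β * x0 - 1) ^ 2 + 1
      = (1 - (q * N - x0) * β) ^ 2 + 2 * x0 * (q * N - x0) * β ^ 2 := by ring
  simp only [radicand]
  have hd : 0 < 2 * x0 * (q * N - x0) := by have := sub_pos.2 hx0N; positivity
  exact ((strictMonoOn_sqrt_sq_add_sub_one_div hd).mono Ioo_subset_Ioi_self).const_add _

theorem wmodel_x1_increasing_in_beta (q N x0 : ℝ)
    (hq0 : 0 < q) (hq1 : q < 1) (hN : 0 < N)
    (hx0 : 0 < x0) (hx0N : x0 < q * N)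
    (harg : ∀ β ∈ Set.Ioo (0:ℝ) (2 / (q * N + x0)),
      0 < (β * q * N - 1)^2 - (β * x0 - 1)^2 + 1) :
    StrictMonoOn (fun β => q * N + (Real.sqrt ((β * q * N - 1)^2 - (β * x0 - 1)^2 + 1) - 1) / β)
      (Set.Ioo (0:ℝ) (2 / (q * N + x0))) :=
  wmodel_x1_increasing_in_beta_general q N x0 hx0 hx0N
end

section
/- Fix q ∈ (0,1), N > 0, 0 < x0 < qN. There exists θ with 1/(qN+x0) < θ < 2/(qN+x0) such that the function x1(β) = qN + (sqrt((βqN-1)² - (βx0-1)² + 1) - 1)/β is convex on (0, θ] and concave on [θ, 2/(qN+x0)). -/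
/-!
Write `c = qN - x0`, `s = qN + x0` and `u = √(c s β² - 2 c β + 1)`, so that
`x1 = qN + (u - 1) / β`. A direct computation gives
`x1'' = c² (u + sβ - 1) G / (β u³ (1 + u)²)` with `G = u (3 - 2 sβ) - (sβ - 1)`; on `(0, 2/s)`
the prefactor is positive since `u > |sβ - 1|` there. `G` is strictly decreasing on all of `ℝ`
(because `|c (sβ - 1)| < s u`), with `G (1/s) = u > 0` and `G (2/s) = -2`, so its unique zero
`θ ∈ (1/s, 2/s)` separates the convex part from the concave one.
-/

open Real Set

noncomputable section
namespace WModel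

def radicand (c s β : ℝ) : ℝ := c * s * β ^ 2 - 2 * c * β + 1

lemma radicand_sub_add (a b β : ℝ) :
    radicand (a - b) (a + b) β = (β * a - 1) ^ 2 - (β * b - 1) ^ 2 + 1 := by
  unfold radicand
  ring

def x1 (a c s β : ℝ) : ℝ := a + (√(radicand c s β) - 1) / β

def x1Deriv (c s β : ℝ) : ℝ :=
  (√(radicand c s β) + c * β - 1) / (√(radicand c s β) * β ^ 2)

def curvatureFactor (c s β : ℝ) : ℝ := √(radicand c s β) * (3 - 2 * s * β) - (s * β - 1)

section
variable {c s : ℝ}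

lemma radicand_pos (hc : 0 < c) (hcs : c < s) (β : ℝ) : 0 < radicand c s β := by
  unfold radicand
  nlinarith [sq_nonneg (s * β - 1), mul_pos hc (sub_pos.2 hcs)]

lemma sq_sqrt_radicand (hc : 0 < c) (hcs : c < s) (β : ℝ) :
    √(radicand c s β) ^ 2 = c * s * β ^ 2 - 2 * c * β + 1 :=
  sq_sqrt (radicand_pos hc hcs β).le

lemma hasDerivAt_sqrt_radicand (hc : 0 < c) (hcs : c < s) (β : ℝ) :
    HasDerivAt (fun x => √(radicand c s x)) (c * (s * β - 1) / √(radicand c s β)) β := by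
  have h : HasDerivAt (radicand c s) (c * s * (2 * β) - 2 * c) β := by
    unfold radicand
    simpa using (((hasDerivAt_pow 2 β).const_mul (c * s)).sub
      ((hasDerivAt_id' β).const_mul (2 * c))).add_const 1
  convert h.sqrt (radicand_pos hc hcs β).ne' using 1
  field_simp

lemma hasDerivAt_x1 (a : ℝ) (hc : 0 < c) (hcs : c < s) {β : ℝ} (hβ : β ≠ 0) :
    HasDerivAt (x1 a c s) (x1Deriv c s β) β := by
  have hu := sqrt_pos.2 (radicand_pos hc hcs β)
  have hu2 := sq_sqrt_radicand hc hcs β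
  refine ((((hasDerivAt_sqrt_radicand hc hcs β).sub_const 1).div (hasDerivAt_id' β) hβ).const_add
    a).congr_deriv ?_
  unfold x1Deriv
  set u := √(radicand c s β)
  field_simp
  linear_combination -hu2

lemma hasDerivAt_x1Deriv (hc : 0 < c) (hcs : c < s) {β : ℝ} (hβ : β ≠ 0) :
    HasDerivAt (x1Deriv c s)
      (c ^ 2 * (√(radicand c s β) + s * β - 1) * curvatureFactor c s β /
        (β * √(radicand c s β) ^ 3 * (1 + √(radicand c s β)) ^ 2)) β := by
  have hu := sqrt_pos.2 (radicand_pos hc hcs β)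
  have hu2 := sq_sqrt_radicand hc hcs β
  have hu' := hasDerivAt_sqrt_radicand hc hcs β
  refine (((hu'.add ((hasDerivAt_id' β).const_mul c)).sub_const 1).div
    (hu'.mul (hasDerivAt_pow 2 β)) (mul_ne_zero hu.ne' (pow_ne_zero 2 hβ))).congr_deriv ?_
  unfold curvatureFactor
  simp only [Pi.add_apply, Pi.mul_apply]
  set u := √(radicand c s β)
  push_cast
  field_simp
  -- the cofactor is the quotient of the cleared numerator by `u ^ 2 - radicand c s β`
  linear_combination (β * c - β ^ 2 * c * s + 2 * u * β * c - 2 * u * β ^ 2 * c * s - 2 * u ^ 2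
    - u ^ 2 * β * c - 2 * u ^ 3) * hu2

lemma hasDerivAt_curvatureFactor (hc : 0 < c) (hcs : c < s) (β : ℝ) :
    HasDerivAt (curvatureFactor c s)
      (c * (s * β - 1) * (3 - 2 * s * β) / √(radicand c s β) - s * (2 * √(radicand c s β) + 1))
      β := by
  refine (((hasDerivAt_sqrt_radicand hc hcs β).mul
    (((hasDerivAt_id' β).const_mul (2 * s)).const_sub 3)).sub
    (((hasDerivAt_id' β).const_mul s).sub_const 1)).congr_deriv ?_
  ring

lemma curvatureFactor_deriv_neg (hc : 0 < c) (hcs : c < s) (β : ℝ) :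
    c * (s * β - 1) * (3 - 2 * s * β) / √(radicand c s β) - s * (2 * √(radicand c s β) + 1)
      < 0 := by
  have hu := sqrt_pos.2 (radicand_pos hc hcs β)
  have hu2 := sq_sqrt_radicand hc hcs β
  set u := √(radicand c s β)
  have hs : 0 < s := hc.trans hcs
  have hsq : (c * (s * β - 1)) ^ 2 < (s * u) ^ 2 := by
    rw [mul_pow s, hu2]
    nlinarith [mul_pos (sub_pos.2 hcs)
      (add_pos_of_nonneg_of_pos (mul_nonneg hc.le (sq_nonneg (s * β - 1))) hs)]
  have hlt : c * (s * β - 1) < s * u := (abs_lt.1 (abs_lt_of_sq_lt_sq hsq (by positivity))).2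
  rw [sub_neg, div_lt_iff₀ hu]
  rcases le_or_gt ((s * β - 1) * (3 - 2 * s * β)) 0 with h | h
  · nlinarith [mul_pos (mul_pos hs hu) (by positivity : 0 < 2 * u + 1)]
  · have hm : 0 < s * β - 1 := by nlinarith
    nlinarith [mul_pos hc (mul_pos hm hm), mul_pos (mul_pos hs hu) hu]

lemma strictAnti_curvatureFactor (hc : 0 < c) (hcs : c < s) :
    StrictAnti (curvatureFactor c s) :=
  strictAnti_of_hasDerivAt_neg (hasDerivAt_curvatureFactor hc hcs)
    (curvatureFactor_deriv_neg hc hcs)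

lemma continuous_curvatureFactor (hc : 0 < c) (hcs : c < s) : Continuous (curvatureFactor c s) :=
  continuous_iff_continuousAt.2 fun β => (hasDerivAt_curvatureFactor hc hcs β).continuousAt

lemma curvatureFactor_one_div_pos (hc : 0 < c) (hcs : c < s) :
    0 < curvatureFactor c s (1 / s) := by
  have hs : s ≠ 0 := (hc.trans hcs).ne'
  have hu := sqrt_pos.2 (radicand_pos hc hcs (1 / s))
  have h1 : 2 * s * (1 / s) = 2 := by field_simp
  simp only [curvatureFactor, mul_one_div_cancel hs, h1]
  linarith

lemma curvatureFactor_two_div_neg (hc : 0 < c) (hcs : c < s) :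
    curvatureFactor c s (2 / s) < 0 := by
  have hs : s ≠ 0 := (hc.trans hcs).ne'
  have h1 : radicand c s (2 / s) = 1 := by
    unfold radicand
    field_simp
    ring
  have h2 : s * (2 / s) = 2 := by field_simp
  simp only [curvatureFactor, h1, sqrt_one, mul_assoc, h2]
  norm_num

lemma sqrt_radicand_add_mul_sub_one_pos (hc : 0 < c) (hcs : c < s) {β : ℝ} (hβ : 0 < β)
    (hβs : β < 2 / s) :
    0 < √(radicand c s β) + s * β - 1 := by
  have hs : 0 < s := hc.trans hcs
  have hu := sqrt_pos.2 (radicand_pos hc hcs β)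
  have hu2 := sq_sqrt_radicand hc hcs β
  have hsβ : s * β < 2 := by rwa [lt_div_iff₀ hs, mul_comm] at hβs
  have hsq : (s * β - 1) ^ 2 < √(radicand c s β) ^ 2 := by
    nlinarith [mul_pos (mul_pos hβ (sub_pos.2 hcs)) (sub_pos.2 hsβ)]
  nlinarith [abs_lt.1 (abs_lt_of_sq_lt_sq hsq hu.le)]

lemma convexOn_x1 (a : ℝ) (hc : 0 < c) (hcs : c < s) {D : Set ℝ} (hD : Convex ℝ D)
    (hDs : D ⊆ Ioo 0 (2 / s)) (hG : ∀ β ∈ D, 0 ≤ curvatureFactor c s β) :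
    ConvexOn ℝ D (x1 a c s) := by
  refine convexOn_of_hasDerivWithinAt2_nonneg hD
    (fun β hβ => (hasDerivAt_x1 a hc hcs (hDs hβ).1.ne').continuousAt.continuousWithinAt)
    (fun β hβ => (hasDerivAt_x1 a hc hcs (hDs (interior_subset hβ)).1.ne').hasDerivWithinAt)
    (fun β hβ => (hasDerivAt_x1Deriv hc hcs (hDs (interior_subset hβ)).1.ne').hasDerivWithinAt)
    fun β hβ => ?_
  obtain ⟨hβ0, hβs⟩ := hDs (interior_subset hβ)
  exact div_nonneg (mul_nonneg (mul_nonneg (sq_nonneg c)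
    (sqrt_radicand_add_mul_sub_one_pos hc hcs hβ0 hβs).le) (hG β (interior_subset hβ))) (by positivity)

lemma concaveOn_x1 (a : ℝ) (hc : 0 < c) (hcs : c < s) {D : Set ℝ} (hD : Convex ℝ D)
    (hDs : D ⊆ Ioo 0 (2 / s)) (hG : ∀ β ∈ D, curvatureFactor c s β ≤ 0) :
    ConcaveOn ℝ D (x1 a c s) := by
  refine concaveOn_of_hasDerivWithinAt2_nonpos hD
    (fun β hβ => (hasDerivAt_x1 a hc hcs (hDs hβ).1.ne').continuousAt.continuousWithinAt)
    (fun β hβ => (hasDerivAt_x1 a hc hcs (hDs (interior_subset hβ)).1.ne').hasDerivWithinAt)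
    (fun β hβ => (hasDerivAt_x1Deriv hc hcs (hDs (interior_subset hβ)).1.ne').hasDerivWithinAt)
    fun β hβ => ?_
  obtain ⟨hβ0, hβs⟩ := hDs (interior_subset hβ)
  exact div_nonpos_of_nonpos_of_nonneg (mul_nonpos_of_nonneg_of_nonpos
    (mul_nonneg (sq_nonneg c) (sqrt_radicand_add_mul_sub_one_pos hc hcs hβ0 hβs).le)
    (hG β (interior_subset hβ))) (by positivity)

theorem exists_inflection_x1 (a : ℝ) (hc : 0 < c) (hcs : c < s) :
    ∃ θ, 1 / s < θ ∧ θ < 2 / s ∧ ConvexOn ℝ (Ioc 0 θ) (x1 a c s) ∧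
      ConcaveOn ℝ (Ico θ (2 / s)) (x1 a c s) := by
  have hs : 0 < s := hc.trans hcs
  have hG := strictAnti_curvatureFactor hc hcs
  obtain ⟨θ, ⟨h1θ, hθ2⟩, hGθ⟩ : ∃ θ ∈ Ioo (1 / s) (2 / s), curvatureFactor c s θ = 0 :=
    intermediate_value_Ioo' (by gcongr; norm_num) (continuous_curvatureFactor hc hcs).continuousOn
      ⟨curvatureFactor_two_div_neg hc hcs, curvatureFactor_one_div_pos hc hcs⟩
  have hθ0 : 0 < θ := (one_div_pos.2 hs).trans h1θ
  refine ⟨θ, h1θ, hθ2, convexOn_x1 a hc hcs (convex_Ioc 0 θ) ?_ ?_,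
    concaveOn_x1 a hc hcs (convex_Ico θ (2 / s)) ?_ ?_⟩
  · exact fun β hβ => ⟨hβ.1, hβ.2.trans_lt hθ2⟩
  · exact fun β hβ => hGθ ▸ hG.antitone hβ.2
  · exact fun β hβ => ⟨hθ0.trans_le hβ.1, hβ.2⟩
  · exact fun β hβ => hGθ ▸ hG.antitone hβ.1

end

end WModel
end

open WModel in
theorem wmodel_x1_inflection_general (q N x0 : ℝ)
    (hx0 : 0 < x0) (hx0N : x0 < q * N) :
    ∃ θ : ℝ, 1 / (q * N + x0) < θ ∧ θ < 2 / (q * N + x0) ∧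
      ConvexOn ℝ (Set.Ioc 0 θ)
        (fun β => q * N + (Real.sqrt ((β * q * N - 1)^2 - (β * x0 - 1)^2 + 1) - 1) / β) ∧
      ConcaveOn ℝ (Set.Ico θ (2 / (q * N + x0)))
        (fun β => q * N + (Real.sqrt ((β * q * N - 1)^2 - (β * x0 - 1)^2 + 1) - 1) / β) := by
  have hx1 : (fun β => q * N + (Real.sqrt ((β * q * N - 1)^2 - (β * x0 - 1)^2 + 1) - 1) / β)
      = x1 (q * N) (q * N - x0) (q * N + x0) := by
    funext β
    simp only [x1, radicand_sub_add, mul_assoc]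
  rw [hx1]
  exact exists_inflection_x1 (q * N) (sub_pos.2 hx0N) (by linarith)

theorem wmodel_x1_inflection (q N x0 : ℝ)
    (hq0 : 0 < q) (hq1 : q < 1) (hN : 0 < N)
    (hx0 : 0 < x0) (hx0N : x0 < q * N)
    (harg : ∀ β ∈ Set.Ioo (0:ℝ) (2 / (q * N + x0)),
      0 < (β * q * N - 1)^2 - (β * x0 - 1)^2 + 1) :
    ∃ θ : ℝ, 1 / (q * N + x0) < θ ∧ θ < 2 / (q * N + x0) ∧
      ConvexOn ℝ (Set.Ioc 0 θ)
        (fun β => q * N + (Real.sqrt ((β * q * N - 1)^2 - (β * x0 - 1)^2 + 1) - 1) / β) ∧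
      ConcaveOn ℝ (Set.Ico θ (2 / (q * N + x0)))
        (fun β => q * N + (Real.sqrt ((β * q * N - 1)^2 - (β * x0 - 1)^2 + 1) - 1) / β) :=
  wmodel_x1_inflection_general q N x0 hx0 hx0N
end

section
/- If β < 2/(qN + x0), βqN > 1 > βx0 and x0 < qN, then x1 = qN + (sqrt((βqN-1)² - (βx0-1)² + 1) - 1)/β < qN, i.e. only a strict subset of interested users ultimately watch the video. -/
/-! With a = βqN and b = βx0, the radicand is 1 + (a - 1)² - (b - 1)². Since 1 < a and
a + b = β(qN + x0) < 2, the point a is closer to 1 than b is, so the radicand is below 1 and the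
correction (√· - 1)/β to qN is negative. -/

lemma mul_lt_of_lt_div_of_pos {α : Type*} [Field α] [LinearOrder α] [IsStrictOrderedRing α]
    {a b c : α} (ha : 0 < a) (hb : 0 ≤ b) (habc : a < b / c) : a * c < b := by
  have hc : 0 < c := by
    by_contra! hc
    exact (ha.trans habc).not_ge (div_nonpos_of_nonneg_of_nonpos hb hc)
  exact (lt_div_iff₀ hc).1 habc

lemma sq_sub_lt_sq_sub_of_lt_of_add_lt {α : Type*} [Field α] [LinearOrder α]
    [IsStrictOrderedRing α] {a b c : α} (hba : b < a) (habc : a + b < 2 * c) :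
    (a - c) ^ 2 < (b - c) ^ 2 := by
  rw [← neg_sub c b, neg_sq]
  exact sq_lt_sq' (by linarith) (by linarith)

theorem wmodel_insufficient_general (β q N x0 : ℝ)
    (hβ : 0 < β)
    (hβqN : 1 < β * q * N)
    (hβsmall : β < 2 / (q * N + x0)) :
    q * N + (Real.sqrt ((β * q * N - 1)^2 - (β * x0 - 1)^2 + 1) - 1) / β < q * N := by
  have hsum : β * (q * N + x0) < 2 := mul_lt_of_lt_div_of_pos hβ zero_le_two hβsmall
  have hsq : (β * q * N - 1) ^ 2 < (β * x0 - 1) ^ 2 :=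
    sq_sub_lt_sq_sub_of_lt_of_add_lt (by linarith) (by linarith)
  have hsqrt : Real.sqrt ((β * q * N - 1)^2 - (β * x0 - 1)^2 + 1) < 1 :=
    (Real.sqrt_lt' one_pos).2 (by linarith)
  linarith [div_neg_of_neg_of_pos (sub_neg.2 hsqrt) hβ]

theorem wmodel_insufficient (β q N x0 : ℝ)
    (hβ : 0 < β) (hq0 : 0 < q) (hq1 : q < 1) (hN : 0 < N)
    (hx0 : 0 < x0) (hx0N : x0 < q * N)
    (hβqN : 1 < β * q * N) (hβx0 : β * x0 < 1)
    (harg : 0 < (β * q * N - 1)^2 - (β * x0 - 1)^2 + 1)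
    (hβsmall : β < 2 / (q * N + x0)) :
    q * N + (Real.sqrt ((β * q * N - 1)^2 - (β * x0 - 1)^2 + 1) - 1) / β < q * N :=
  wmodel_insufficient_general β q N x0 hβ hβqN hβsmall
end

section
/- Suppose v'(t) = v(t)(βqs(t) - 1) and s'(t) = -v(t)/q with v(0) > 0 and βq s(0) > 1, and s(t) is strictly decreasing to a limit s∞ with βq s∞ < 1. Then there is a unique time t* > 0 with βq s(t*) = 1, v is strictly increasing on [0, t*) and strictly decreasing on (t*, ∞); i.e. the popularity curve is unimodal. -/
/-!
With `r t = β q s t - 1`, the popularity solves the linear equation `v' = v r`, so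
`v t = v 0 · exp (∫₀ᵗ r)` stays positive and `v'` has the sign of `r`. Since `s` is strictly
decreasing, `r` is strictly decreasing, positive at `0` and eventually negative; its unique zero
`t*` is the peak of `v`.
-/

open Set Filter

section LinearODE

variable {f g : ℝ → ℝ}

theorem eq_mul_exp_integral_of_hasDerivAt_mul (hg : Continuous g)
    (hf : ∀ t, HasDerivAt f (f t * g t) t) (a t : ℝ) :
    f t = f a * Real.exp (∫ x in a..t, g x) := by
  set G : ℝ → ℝ := fun t => ∫ x in a..t, g x
  have hG : ∀ t, HasDerivAt G (g t) t := fun t => (hg.integral_hasStrictDerivAt a t).hasDerivAt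
  have hderiv : ∀ x, HasDerivAt (fun x => f x * Real.exp (-G x)) 0 x := fun x =>
    ((hf x).mul (hG x).neg.exp).congr_deriv (by ring)
  have hconst : f t * Real.exp (-G t) = f a * Real.exp (-G a) :=
    is_const_of_deriv_eq_zero (fun x => (hderiv x).differentiableAt) (fun x => (hderiv x).deriv) t a
  have hGa : G a = 0 := intervalIntegral.integral_same
  calc f t = f t * Real.exp (-G t) * Real.exp (G t) := by rw [mul_assoc, ← Real.exp_add]; simp
    _ = f a * Real.exp (G t) := by rw [hconst, hGa]; simp

theorem pos_of_hasDerivAt_mul (hg : Continuous g) (hf : ∀ t, HasDerivAt f (f t * g t) t)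
    {a : ℝ} (ha : 0 < f a) (t : ℝ) : 0 < f t := by
  rw [eq_mul_exp_integral_of_hasDerivAt_mul hg hf a t]
  positivity

theorem strictMonoOn_Iic_of_hasDerivAt_mul (hf : ∀ t, HasDerivAt f (f t * g t) t)
    (hpos : ∀ t, 0 < f t) (hg : StrictAnti g) {a : ℝ} (ha : g a = 0) :
    StrictMonoOn f (Iic a) := by
  have hcont : Continuous f := continuous_iff_continuousAt.2 fun t => (hf t).continuousAt
  refine strictMonoOn_of_deriv_pos (convex_Iic a) hcont.continuousOn fun x hx => ?_
  rw [interior_Iic] at hx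
  rw [(hf x).deriv]
  exact mul_pos (hpos x) (ha ▸ hg hx)

theorem strictAntiOn_Ici_of_hasDerivAt_mul (hf : ∀ t, HasDerivAt f (f t * g t) t)
    (hpos : ∀ t, 0 < f t) (hg : StrictAnti g) {a : ℝ} (ha : g a = 0) :
    StrictAntiOn f (Ici a) := by
  have hcont : Continuous f := continuous_iff_continuousAt.2 fun t => (hf t).continuousAt
  refine strictAntiOn_of_deriv_neg (convex_Ici a) hcont.continuousOn fun x hx => ?_
  rw [interior_Ici] at hx
  rw [(hf x).deriv]
  exact mul_neg_of_pos_of_neg (hpos x) (ha ▸ hg hx)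

end LinearODE

theorem wmodel_unimodal_general (β q sInf : ℝ) (v s : ℝ → ℝ)
    (hv : ∀ t, HasDerivAt v (v t * (β * q * s t - 1)) t)
    (hs : ∀ t, HasDerivAt s (-(v t) / q) t)
    (hv0 : 0 < v 0) (hs0 : 1 < β * q * s 0)
    (hsanti : StrictAnti s)
    (hslim : Filter.Tendsto s Filter.atTop (nhds sInf))
    (hsInf : β * q * sInf < 1) :
    ∃ tstar : ℝ, 0 < tstar ∧ β * q * s tstar = 1 ∧
      (∀ t, 0 < t → β * q * s t = 1 → t = tstar) ∧
      StrictMonoOn v (Set.Ico 0 tstar) ∧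
      StrictAntiOn v (Set.Ioi tstar) := by
  set r : ℝ → ℝ := fun t => β * q * s t - 1 with hr_def
  obtain ⟨T, hTr, hT1⟩ :=
    (((hslim.const_mul (β * q)).eventually_lt_const hsInf).and (eventually_ge_atTop 1)).exists
  have hT : 0 < T := zero_lt_one.trans_le hT1
  -- `β q > 0` is forced: `β q s` drops from above `1` at time `0` to below `1` at time `T`.
  have hc : 0 < β * q := by
    have := hsanti hT
    nlinarith
  have hr : StrictAnti r := fun a b hab => by
    have := hsanti hab
    simp only [hr_def]
    nlinarith
  have hrcont : Continuous r :=
    (continuous_iff_continuousAt.2 fun t => (hs t).continuousAt).const_mul _ |>.sub continuous_const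
  have hvpos := pos_of_hasDerivAt_mul hrcont hv hv0
  obtain ⟨tstar, ⟨htstar, -⟩, hroot⟩ :=
    intermediate_value_Ioo' hT.le hrcont.continuousOn
      (show (0 : ℝ) ∈ Ioo (r T) (r 0) by simp only [hr_def, mem_Ioo]; constructor <;> linarith)
  have hroot' : β * q * s tstar = 1 := by simp only [hr_def] at hroot; linarith
  refine ⟨tstar, htstar, hroot', fun t _ ht => hr.injective ?_,
    (strictMonoOn_Iic_of_hasDerivAt_mul hv hvpos hr hroot).mono
      (Ico_subset_Iio_self.trans Iio_subset_Iic_self),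
    (strictAntiOn_Ici_of_hasDerivAt_mul hv hvpos hr hroot).mono Ioi_subset_Ici_self⟩
  simp only [hr_def]
  linarith

theorem wmodel_unimodal (β q sInf : ℝ) (v s : ℝ → ℝ)
    (hβ : 0 < β) (hq0 : 0 < q) (hq1 : q < 1)
    (hv : ∀ t, HasDerivAt v (v t * (β * q * s t - 1)) t)
    (hs : ∀ t, HasDerivAt s (-(v t) / q) t)
    (hv0 : 0 < v 0) (hs0 : 1 < β * q * s 0)
    (hsanti : StrictAnti s)
    (hslim : Filter.Tendsto s Filter.atTop (nhds sInf))
    (hsInf : β * q * sInf < 1) :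
    ∃ tstar : ℝ, 0 < tstar ∧ β * q * s tstar = 1 ∧
      (∀ t, 0 < t → β * q * s t = 1 → t = tstar) ∧
      StrictMonoOn v (Set.Ico 0 tstar) ∧
      StrictAntiOn v (Set.Ioi tstar) :=
  wmodel_unimodal_general β q sInf v s hv hs hv0 hs0 hsanti hslim hsInf
end
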